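/- arXiv:0801.0949 — 5 statements merged into one kernel-verified Lean document; each statement's English description precedes it below -/
import Mathlib

section
/- Let (A, L) and (B, M) be live automata with the same external actions and assume there is an image-finite liveness-preserving backward simulation b = (g, h) from (A, L) to (B, M) with respect to invariants I_A and I_B. Let α be any execution of A. Then the digraph G induced by α, b, I_B, L, and M satisfies: (1) for each i with 0 ≤ i ≤ |α| there is at least one node of G of the form (u, i); (2) the roots of G (nodes with no incoming edge) are exactly the nodes of the form (u, 0); (3) G has finitely many roots; (4) each node of G has finite outdegree; and (5) each node of G is reachable from some root of G. -/
/- Background formalization: automata, executions, traces, complemented-pairs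
   liveness conditions, liveness-preserving simulation relations, etc. -/

open Classical

section AutomatonDefs

/-- An automaton over a type `S` of states and a type `Act` of actions. -/
structure Automaton (S : Type*) (Act : Type*) where
  start : Set S
  start_nonempty : start.Nonempty
  ext : Set Act
  internal : Set Act
  ext_int_disjoint : Disjoint ext internal
  steps : Set (S × Act × S)
  steps_valid : ∀ t ∈ steps, t.2.1 ∈ ext ∪ internal

variable {S SA SB Act : Type*}

/-- A finite execution fragment `s₀ a₁ s₁ ⋯ a_len s_len`; only the values
`st i` for `i ≤ len` and `act i` for `i < len` are relevant
(`act i` is the action between `st i` and `st (i+1)`). -/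
structure FinFrag (S : Type*) (Act : Type*) where
  len : ℕ
  st : ℕ → S
  act : ℕ → Act

def FinFrag.IsFragOf (f : FinFrag S Act) (A : Automaton S Act) : Prop :=
  ∀ i < f.len, (f.st i, f.act i, f.st (i + 1)) ∈ A.steps

def FinFrag.IsExecOf (f : FinFrag S Act) (A : Automaton S Act) : Prop :=
  f.IsFragOf A ∧ f.st 0 ∈ A.start

def FinFrag.fstate (f : FinFrag S Act) : S := f.st 0

def FinFrag.lstate (f : FinFrag S Act) : S := f.st f.len

/-- A finite execution fragment meets a set `X` of states iff some state along
it lies in `X`. -/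
def FinFrag.Meets (f : FinFrag S Act) (X : Set S) : Prop := ∃ i ≤ f.len, f.st i ∈ X

def FinFrag.Prefix (f g : FinFrag S Act) : Prop :=
  f.len ≤ g.len ∧ (∀ i ≤ f.len, f.st i = g.st i) ∧ ∀ i < f.len, f.act i = g.act i

def FinFrag.StrictPrefix (f g : FinFrag S Act) : Prop :=
  f.Prefix g ∧ f.len < g.len

/-- Equality of finite fragments (up to irrelevant values). -/
def FinFrag.Equiv (f g : FinFrag S Act) : Prop :=
  f.len = g.len ∧ (∀ i ≤ f.len, f.st i = g.st i) ∧ ∀ i < f.len, f.act i = g.act i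

/-- The trace of a finite list of actions: the sublist of external actions. -/
noncomputable def ltrace (ext : Set Act) (l : List Act) : List Act :=
  l.filter fun a => decide (a ∈ ext)

/-- The trace of a finite execution fragment. -/
noncomputable def FinFrag.trace (f : FinFrag S Act) (ext : Set Act) : List Act :=
  ltrace ext ((List.range f.len).map f.act)

/-- trace(a) = a if a is external, the empty sequence otherwise. -/
noncomputable def atrace (ext : Set Act) (a : Act) : List Act :=
  if a ∈ ext then [a] else []

/-- The trace of the segment of actions `b_{j+1} ⋯ b_k` (0-indexed:
`act j, …, act (k-1)`) of an execution with actions `act`. -/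
noncomputable def segTrace (ext : Set Act) (act : ℕ → Act) (j k : ℕ) : List Act :=
  ltrace ext ((List.range (k - j)).map fun t => act (j + t))

/-- An infinite execution `s₀ a₁ s₁ a₂ s₂ ⋯` (with `act i` the action between
`st i` and `st (i+1)`). -/
structure InfExec (S : Type*) (Act : Type*) where
  st : ℕ → S
  act : ℕ → Act

def InfExec.IsExecOf (e : InfExec S Act) (A : Automaton S Act) : Prop :=
  e.st 0 ∈ A.start ∧ ∀ i, (e.st i, e.act i, e.st (i + 1)) ∈ A.steps

/-- The prefix `α|_n` of an infinite execution. -/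
def InfExec.take (e : InfExec S Act) (n : ℕ) : FinFrag S Act := ⟨n, e.st, e.act⟩

/-- An infinite execution extends a finite one. -/
def InfExec.Extends (e : InfExec S Act) (f : FinFrag S Act) : Prop :=
  (∀ i ≤ f.len, e.st i = f.st i) ∧ ∀ i < f.len, e.act i = f.act i

/-- `P n` holds for infinitely many `n`. -/
def InfOften (P : ℕ → Prop) : Prop := ∀ n, ∃ m, n ≤ m ∧ P m

/-- A complemented pair `⟨R, G⟩` of sets of states. -/
structure CPair (S : Type*) where
  R : Set S
  G : Set S

/-- `α ⊨ p`: if `α` contains infinitely many states in `p.R` then it contains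
infinitely many states in `p.G`. -/
def InfExec.Sat (e : InfExec S Act) (p : CPair S) : Prop :=
  InfOften (fun n => e.st n ∈ p.R) → InfOften fun n => e.st n ∈ p.G

/-- The live executions of `(A, L)`. -/
def lexecs (A : Automaton S Act) (L : Set (CPair S)) : Set (InfExec S Act) :=
  {e | e.IsExecOf A ∧ ∀ p ∈ L, e.Sat p}

/-- Machine closure: `(A, L)` is a live automaton (equivalently, `L` is a
complemented-pairs liveness condition over `A`). -/
def IsLivenessCondition (A : Automaton S Act) (L : Set (CPair S)) : Prop :=
  ∀ f : FinFrag S Act, f.IsExecOf A → ∃ e ∈ lexecs A L, e.Extends f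

/-- The semantic closure of `L` in `A`. -/
def closL (A : Automaton S Act) (L : Set (CPair S)) : Set (CPair S) :=
  {p | ∀ e ∈ lexecs A L, e.Sat p}

/-- A state is reachable iff it occurs in some execution. -/
def Reachable (A : Automaton S Act) (s : S) : Prop :=
  ∃ f : FinFrag S Act, f.IsExecOf A ∧ ∃ i ≤ f.len, f.st i = s

/-- An invariant is a superset of the reachable states. -/
def IsAutInvariant (A : Automaton S Act) (I : Set S) : Prop :=
  ∀ s, Reachable A s → s ∈ I

/-- `g[s]` for a relation `g ⊆ states(A) × states(B)`. -/
def gImg (g : Set (SA × SB)) (s : SA) : Set SB := {u | (s, u) ∈ g}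

def ImageFinite (g : Set (SA × SB)) : Prop := ∀ s, (gImg g s).Finite

/-- A transition `s →a s'` of `A` is always-silent (w.r.t. `g`, `I_A`, `I_B`). -/
def AlwaysSilent (A : Automaton SA Act) (B : Automaton SB Act)
    (IA : Set SA) (IB : Set SB) (g : Set (SA × SB)) (s : SA) (a : Act) (s' : SA) : Prop :=
  s ∈ IA ∧ ∀ β : FinFrag SB Act, β.IsFragOf B → β.fstate ∈ gImg g s ∩ IB →
    β.lstate ∈ gImg g s' → β.trace B.ext = atrace A.ext a → β.len = 0

/-- A transition `s →a s'` of `A` is sometimes-silent (w.r.t. `g`, `I_A`, `I_B`). -/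
def SometimesSilent (A : Automaton SA Act) (B : Automaton SB Act)
    (IA : Set SA) (IB : Set SB) (g : Set (SA × SB)) (s : SA) (a : Act) (s' : SA) : Prop :=
  s ∈ IA ∧ ∃ β : FinFrag SB Act, β.IsFragOf B ∧ β.fstate ∈ gImg g s ∩ IB ∧
    β.lstate ∈ gImg g s' ∧ β.trace B.ext = atrace A.ext a ∧ β.len = 0

/-- `(g, h)` is a liveness-preserving forward simulation from `(A, L)` to
`(B, M)` with respect to invariants `I_A`, `I_B`. -/
structure IsLPForwardSim (A : Automaton SA Act) (B : Automaton SB Act)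
    (L : Set (CPair SA)) (M : Set (CPair SB)) (IA : Set SA) (IB : Set SB)
    (g : Set (SA × SB)) (h : CPair SB → CPair SA) : Prop where
  h_total : ∀ q ∈ M, h q ∈ closL A L
  start_cond : ∀ s ∈ A.start, ∃ u ∈ B.start, (s, u) ∈ g
  step_cond : ∀ s a s', (s, a, s') ∈ A.steps → s ∈ IA → ∀ u ∈ gImg g s ∩ IB,
    ∃ β : FinFrag SB Act, β.IsFragOf B ∧ β.fstate = u ∧ β.lstate ∈ gImg g s' ∧
      β.trace B.ext = atrace A.ext a ∧
      ∀ q ∈ M, (β.Meets q.R → s ∈ (h q).R ∨ s' ∈ (h q).R) ∧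
        ((s ∈ (h q).G ∨ s' ∈ (h q).G) → β.Meets q.G)
  nonsilent : ∀ e ∈ lexecs A L,
    InfOften fun n => ¬ AlwaysSilent A B IA IB g (e.st n) (e.act n) (e.st (n + 1))

/-- `(g, h)` is a liveness-preserving backward simulation from `(A, L)` to
`(B, M)` with respect to invariants `I_A`, `I_B`. -/
structure IsLPBackwardSim (A : Automaton SA Act) (B : Automaton SB Act)
    (L : Set (CPair SA)) (M : Set (CPair SB)) (IA : Set SA) (IB : Set SB)
    (g : Set (SA × SB)) (h : CPair SB → CPair SA) : Prop where
  h_total : ∀ q ∈ M, h q ∈ closL A L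
  nonempty_cond : ∀ s ∈ IA, (gImg g s ∩ IB).Nonempty
  start_cond : ∀ s ∈ A.start, gImg g s ∩ IB ⊆ B.start
  step_cond : ∀ s a s', (s, a, s') ∈ A.steps → s ∈ IA → ∀ u' ∈ gImg g s' ∩ IB,
    ∃ β : FinFrag SB Act, β.IsFragOf B ∧ β.fstate ∈ gImg g s ∩ IB ∧ β.lstate = u' ∧
      β.trace B.ext = atrace A.ext a ∧
      ∀ q ∈ M, (β.Meets q.R → s ∈ (h q).R ∨ s' ∈ (h q).R) ∧
        ((s ∈ (h q).G ∨ s' ∈ (h q).G) → β.Meets q.G)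
  nonsilent : ∀ e ∈ lexecs A L,
    InfOften fun n => ¬ SometimesSilent A B IA IB g (e.st n) (e.act n) (e.st (n + 1))

/-- Live index mapping from a finite execution `α` of `A` to a finite
execution `β` of `B` with respect to `(R, H)`. -/
structure LiveIndexMapFF (A : Automaton SA Act) (B : Automaton SB Act)
    (R : Set (SA × SB)) (M : Set (CPair SB)) (H : CPair SB → CPair SA)
    (α : FinFrag SA Act) (β : FinFrag SB Act) (m : ℕ → ℕ) : Prop where
  zero : m 0 = 0
  mono : ∀ i j, i ≤ j → j ≤ α.len → m i ≤ m j
  bound : ∀ i ≤ α.len, m i ≤ β.len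
  rel : ∀ i ≤ α.len, (α.st i, β.st (m i)) ∈ R
  tr : ∀ i, 0 < i → i ≤ α.len →
    segTrace B.ext β.act (m (i - 1)) (m i) = atrace A.ext (α.act (i - 1))
  cofinal : ∀ j ≤ β.len, ∃ i ≤ α.len, j ≤ m i
  pairR : ∀ q ∈ M, ∀ i, 0 < i → i ≤ α.len →
    (∃ j, m (i - 1) ≤ j ∧ j ≤ m i ∧ β.st j ∈ q.R) →
      α.st (i - 1) ∈ (H q).R ∨ α.st i ∈ (H q).R
  pairG : ∀ q ∈ M, ∀ i, 0 < i → i ≤ α.len →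
    (α.st (i - 1) ∈ (H q).G ∨ α.st i ∈ (H q).G) →
      ∃ j, m (i - 1) ≤ j ∧ j ≤ m i ∧ β.st j ∈ q.G

/-- Live index mapping from an infinite execution `α` of `A` to an infinite
execution `β` of `B` with respect to `(R, H)`. -/
structure LiveIndexMapII (A : Automaton SA Act) (B : Automaton SB Act)
    (R : Set (SA × SB)) (M : Set (CPair SB)) (H : CPair SB → CPair SA)
    (α : InfExec SA Act) (β : InfExec SB Act) (m : ℕ → ℕ) : Prop where
  zero : m 0 = 0
  mono : Monotone m
  rel : ∀ i, (α.st i, β.st (m i)) ∈ R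
  tr : ∀ i, 0 < i →
    segTrace B.ext β.act (m (i - 1)) (m i) = atrace A.ext (α.act (i - 1))
  cofinal : ∀ j, ∃ i, j ≤ m i
  pairR : ∀ q ∈ M, ∀ i, 0 < i →
    (∃ j, m (i - 1) ≤ j ∧ j ≤ m i ∧ β.st j ∈ q.R) →
      α.st (i - 1) ∈ (H q).R ∨ α.st i ∈ (H q).R
  pairG : ∀ q ∈ M, ∀ i, 0 < i →
    (α.st (i - 1) ∈ (H q).G ∨ α.st i ∈ (H q).G) →
      ∃ j, m (i - 1) ≤ j ∧ j ≤ m i ∧ β.st j ∈ q.G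

/-- The trace of an infinite execution, as a partial sequence: position `n`
holds the `n`-th external action, if it exists. -/
noncomputable def itrace (ext : Set Act) (act : ℕ → Act) : ℕ → Option Act := fun n =>
  if h : ∃ i, act i ∈ ext ∧ {j | j < i ∧ act j ∈ ext}.ncard = n then some (act h.choose)
  else none

/-- The set of traces of a set of infinite executions. -/
noncomputable def tracesOf (ext : Set Act) (Φ : Set (InfExec S Act)) :
    Set (ℕ → Option Act) :=
  (fun e => itrace ext e.act) '' Φ

/-- `r ⪯ w` for a strict order `lt`. -/
def pLe (lt : CPair S → CPair S → Prop) (r w : CPair S) : Prop := lt r w ∨ r = w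

/-- The immediate successors of `r` in `(P, lt)`. -/
def succSet (P : Set (CPair S)) (lt : CPair S → CPair S → Prop) (r : CPair S) :
    Set (CPair S) :=
  {w | w ∈ P ∧ lt r w ∧ ∀ w' ∈ P, pLe lt r w' → lt w' w → r = w'}

/-- No state occurs infinitely often along any execution in `φ`. -/
def NoInfRep (φ : Set (InfExec S Act)) : Prop :=
  ∀ e ∈ φ, ∀ s : S, {n | e.st n = s}.Finite

/-- `γ ⊴ α`: some suffix of `γ` maps into `α` as in the robustness definition. -/
def Subsumes (γ α : InfExec S Act) : Prop :=
  ∃ k : ℕ, ∃ m : ℕ → ℕ, (∀ i, α.st (m i) = γ.st (k + i)) ∧ ∀ i, {j | m j = i}.Finite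

/-- A live execution property for `A`. -/
def IsLiveExecProperty (A : Automaton S Act) (φ : Set (InfExec S Act)) : Prop :=
  (∀ e ∈ φ, e.IsExecOf A) ∧
    ∀ f : FinFrag S Act, f.IsExecOf A → ∃ e ∈ φ, e.Extends f

/-- `φ` is robust for `A`. -/
def Robust (A : Automaton S Act) (φ : Set (InfExec S Act)) : Prop :=
  ∀ γ α : InfExec S Act, γ.IsExecOf A → α.IsExecOf A → Subsumes γ α → γ ∈ φ → α ∈ φ

/-- `A` is a forest automaton: each reachable state is the last state of
exactly one finite execution. -/
def IsForest (A : Automaton S Act) : Prop :=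
  ∀ f g : FinFrag S Act, f.IsExecOf A → g.IsExecOf A → f.lstate = g.lstate → f.Equiv g

/-- A (finite or infinite) execution, with length in `ℕ∞`. -/
structure ExecE (S : Type*) (Act : Type*) where
  len : ℕ∞
  st : ℕ → S
  act : ℕ → Act

def ExecE.IsExecOf (e : ExecE S Act) (A : Automaton S Act) : Prop :=
  e.st 0 ∈ A.start ∧ ∀ i : ℕ, (i : ℕ∞) < e.len → (e.st i, e.act i, e.st (i + 1)) ∈ A.steps

/-- Node of the digraph induced by `α`, `b = (g,h)`, `I_B`, `L`, `M`. -/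
def DNode (IB : Set SB) (g : Set (SA × SB)) (α : ExecE SA Act) (x : SB × ℕ) : Prop :=
  (x.2 : ℕ∞) ≤ α.len ∧ x.1 ∈ gImg g (α.st x.2) ∩ IB

/-- Edge of the digraph induced by `α`, `b = (g,h)`, `I_B`, `L`, `M`. -/
def DEdge (A : Automaton SA Act) (B : Automaton SB Act) (IB : Set SB)
    (g : Set (SA × SB)) (M : Set (CPair SB)) (h : CPair SB → CPair SA)
    (α : ExecE SA Act) (x y : SB × ℕ) : Prop :=
  DNode IB g α x ∧ DNode IB g α y ∧ y.2 = x.2 + 1 ∧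
  ∃ β : FinFrag SB Act, β.IsFragOf B ∧ β.fstate = x.1 ∧ β.lstate = y.1 ∧
    β.trace B.ext = atrace A.ext (α.act x.2) ∧
    ∀ q ∈ M, (β.Meets q.R → α.st x.2 ∈ (h q).R ∨ α.st (x.2 + 1) ∈ (h q).R) ∧
      ((α.st x.2 ∈ (h q).G ∨ α.st (x.2 + 1) ∈ (h q).G) → β.Meets q.G)

/-- Root of the induced digraph: a node with no incoming edge. -/
def DRoot (A : Automaton SA Act) (B : Automaton SB Act) (IB : Set SB)
    (g : Set (SA × SB)) (M : Set (CPair SB)) (h : CPair SB → CPair SA)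
    (α : ExecE SA Act) (x : SB × ℕ) : Prop :=
  DNode IB g α x ∧ ¬ ∃ y, DEdge A B IB g M h α y x

end AutomatonDefs

/-! A backward simulation can only be followed from the end of `α` towards its start: every
node at level `i + 1` has an incoming edge from level `i`, obtained by applying the step
condition to the transition `α.st i → α.st (i + 1)`, whose source is reachable and hence in
`I_A`. So no node beyond level `0` is a root, and walking back along these edges from any
node ends in a root. Finiteness comes from image-finiteness alone, since all nodes of a
level `i` lie in the finite set `g[α.st i]`. -/

section InducedDigraph

variable {SA SB Act : Type*} {A : Automaton SA Act} {B : Automaton SB Act}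
  {L : Set (CPair SA)} {M : Set (CPair SB)} {IA : Set SA} {IB : Set SB}
  {g : Set (SA × SB)} {h : CPair SB → CPair SA} {α : ExecE SA Act}

theorem ExecE.IsExecOf.reachable_st (hα : α.IsExecOf A) {i : ℕ} (hi : (i : ℕ∞) ≤ α.len) :
    Reachable A (α.st i) :=
  ⟨⟨i, α.st, α.act⟩,
    ⟨fun j hj => hα.2 j (lt_of_lt_of_le (by exact_mod_cast hj) hi), hα.1⟩, i, le_rfl, rfl⟩

theorem exists_dNode (hsim : IsLPBackwardSim A B L M IA IB g h) (hIA : IsAutInvariant A IA)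
    (hα : α.IsExecOf A) {i : ℕ} (hi : (i : ℕ∞) ≤ α.len) : ∃ u, DNode IB g α (u, i) :=
  let ⟨u, hu⟩ := hsim.nonempty_cond _ (hIA _ (hα.reachable_st hi))
  ⟨u, hi, hu⟩

theorem exists_dEdge_of_dNode_succ (hsim : IsLPBackwardSim A B L M IA IB g h)
    (hIA : IsAutInvariant A IA) (hα : α.IsExecOf A) {u : SB} {i : ℕ}
    (hu : DNode IB g α (u, i + 1)) : ∃ u', DEdge A B IB g M h α (u', i) (u, i + 1) := by
  have hlt : (i : ℕ∞) < α.len := lt_of_lt_of_le (by exact_mod_cast i.lt_succ_self) hu.1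
  obtain ⟨β, hβ, hβf, hβl, hβtr, hβpairs⟩ :=
    hsim.step_cond _ _ _ (hα.2 i hlt) (hIA _ (hα.reachable_st hlt.le)) u hu.2
  exact ⟨β.fstate, ⟨hlt.le, hβf⟩, hu, rfl, β, hβ, rfl, hβl, hβtr, hβpairs⟩

theorem dRoot_iff (hsim : IsLPBackwardSim A B L M IA IB g h) (hIA : IsAutInvariant A IA)
    (hα : α.IsExecOf A) (x : SB × ℕ) :
    DRoot A B IB g M h α x ↔ DNode IB g α x ∧ x.2 = 0 := by
  obtain ⟨u, _ | i⟩ := x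
  · exact ⟨fun hr => ⟨hr.1, rfl⟩, fun ⟨hn, _⟩ => ⟨hn, fun ⟨_, he⟩ => by cases he.2.2.1⟩⟩
  · refine ⟨fun ⟨hn, hne⟩ => ?_, fun ⟨_, h0⟩ => absurd h0 i.succ_ne_zero⟩
    obtain ⟨u', he⟩ := exists_dEdge_of_dNode_succ hsim hIA hα hn
    exact absurd ⟨_, he⟩ hne

theorem finite_setOf_dNode_level (hfin : ImageFinite g) (i : ℕ) :
    {x | DNode IB g α x ∧ x.2 = i}.Finite :=
  ((hfin (α.st i)).prod (Set.finite_singleton i)).subset fun _ ⟨hn, hi⟩ =>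
    ⟨hi ▸ hn.2.1, hi⟩

theorem finite_setOf_dEdge (hfin : ImageFinite g) (x : SB × ℕ) :
    {y | DEdge A B IB g M h α x y}.Finite :=
  (finite_setOf_dNode_level hfin (x.2 + 1)).subset fun _ he => ⟨he.2.1, he.2.2.1⟩

theorem exists_dRoot_reflTransGen (hsim : IsLPBackwardSim A B L M IA IB g h)
    (hIA : IsAutInvariant A IA) (hα : α.IsExecOf A) (x : SB × ℕ) (hx : DNode IB g α x) :
    ∃ r, DRoot A B IB g M h α r ∧ Relation.ReflTransGen (DEdge A B IB g M h α) r x := by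
  obtain ⟨u, i⟩ := x
  induction i generalizing u with
  | zero => exact ⟨_, (dRoot_iff hsim hIA hα _).2 ⟨hx, rfl⟩, .refl⟩
  | succ i ih =>
    obtain ⟨u', he⟩ := exists_dEdge_of_dNode_succ hsim hIA hα hx
    obtain ⟨r, hr, hpath⟩ := ih u' he.1
    exact ⟨r, hr, hpath.tail he⟩

end InducedDigraph

theorem stmt3_general {SA SB Act : Type*} (A : Automaton SA Act) (B : Automaton SB Act)
    (L : Set (CPair SA)) (M : Set (CPair SB))
    (IA : Set SA) (IB : Set SB)
    (hIA : IsAutInvariant A IA)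
    (g : Set (SA × SB)) (h : CPair SB → CPair SA)
    (hsim : IsLPBackwardSim A B L M IA IB g h) (hfin : ImageFinite g)
    (α : ExecE SA Act) (hα : α.IsExecOf A) :
    (∀ i : ℕ, (i : ℕ∞) ≤ α.len → ∃ u, DNode IB g α (u, i)) ∧
    (∀ x, DRoot A B IB g M h α x ↔ DNode IB g α x ∧ x.2 = 0) ∧
    {x | DRoot A B IB g M h α x}.Finite ∧
    (∀ x, DNode IB g α x → {y | DEdge A B IB g M h α x y}.Finite) ∧
    (∀ x, DNode IB g α x →
      ∃ r, DRoot A B IB g M h α r ∧ Relation.ReflTransGen (DEdge A B IB g M h α) r x) :=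
  ⟨fun _ hi => exists_dNode hsim hIA hα hi,
    dRoot_iff hsim hIA hα,
    (finite_setOf_dNode_level hfin 0).subset fun x hx => (dRoot_iff hsim hIA hα x).1 hx,
    fun x _ => finite_setOf_dEdge hfin x,
    exists_dRoot_reflTransGen hsim hIA hα⟩

/-- properties of the digraph induced by an execution `α` of `A`,
an image-finite liveness-preserving backward simulation `b = (g, h)`, `I_B`,
`L`, and `M`. -/
theorem stmt3 {SA SB Act : Type*} (A : Automaton SA Act) (B : Automaton SB Act)
    (L : Set (CPair SA)) (M : Set (CPair SB))
    (hL : IsLivenessCondition A L) (hM : IsLivenessCondition B M)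
    (hext : A.ext = B.ext)
    (IA : Set SA) (IB : Set SB)
    (hIA : IsAutInvariant A IA) (hIB : IsAutInvariant B IB)
    (g : Set (SA × SB)) (h : CPair SB → CPair SA)
    (hsim : IsLPBackwardSim A B L M IA IB g h) (hfin : ImageFinite g)
    (α : ExecE SA Act) (hα : α.IsExecOf A) :
    (∀ i : ℕ, (i : ℕ∞) ≤ α.len → ∃ u, DNode IB g α (u, i)) ∧
    (∀ x, DRoot A B IB g M h α x ↔ DNode IB g α x ∧ x.2 = 0) ∧
    {x | DRoot A B IB g M h α x}.Finite ∧
    (∀ x, DNode IB g α x → {y | DEdge A B IB g M h α x y}.Finite) ∧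
    (∀ x, DNode IB g α x →
      ∃ r, DRoot A B IB g M h α r ∧ Relation.ReflTransGen (DEdge A B IB g M h α) r x) :=
  stmt3_general A B L M IA IB hIA g h hsim hfin α hα
end

section
/- Let (A, L) and (B, M) be live automata with the same external actions such that there is an image-finite liveness-preserving backward simulation b = (g, h) from (A, L) to (B, M) with respect to some invariants. Let α be an arbitrary live execution of (A, L). Then there exists a collection (α'_i, m_i)_{i ≥ 0} of finite executions of B and mappings such that: (1) for all i ≥ 0, m_i is a live index mapping from the prefix α|_i to α'_i with respect to b; (2) for all i > 0, α'_{i−1} is a prefix of α'_i and m_{i−1} equals the restriction of m_i to {0, …, i−1}; and (3) α'_{i−1} is a strict prefix of α'_i for infinitely many i > 0. -/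
/- Background formalization: automata, executions, traces, complemented-pairs
   liveness conditions, liveness-preserving simulation relations, etc. -/

open Classical

/-! The nodes of level `i` are the states `u ∈ g[sᵢ] ∩ I_B`, with an edge from `u` to `u'`
when some fragment of `B` from `u` to `u'` can stand for the step `sᵢ →aᵢ₊₁ sᵢ₊₁`. These
levels are finite, and by the backward step condition every node has a predecessor one level
down, so there are paths of every length and Kőnig's lemma gives an infinite path.
Concatenating the fragments along it yields the executions `α'ᵢ`, with `mᵢ j` the length of
the first `j` fragments. The start condition puts the path's first node among the start
states, and since infinitely many steps of `α` are not sometimes-silent, infinitely many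
fragments are nonempty. -/

section LevelledPaths

variable {β : Type*} (F : ℕ → Set β) (E : ℕ → β → β → Prop)

def LevelPath (n : ℕ) : Type _ :=
  {v : Fin (n + 1) → β //
    (∀ j : Fin (n + 1), v j ∈ F j) ∧ ∀ j : Fin n, E j (v j.castSucc) (v j.succ)}

variable {F E}

def LevelPath.restrict {i n : ℕ} (hin : i ≤ n) (p : LevelPath F E n) : LevelPath F E i :=
  ⟨fun k => p.1 (Fin.castLE (by omega) k), fun k => p.2.1 (Fin.castLE (by omega) k),
    fun j => p.2.2 (Fin.castLE hin j)⟩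

theorem LevelPath.exists_last_eq (hpred : ∀ n, ∀ u ∈ F (n + 1), ∃ v ∈ F n, E n v u) :
    ∀ n, ∀ u ∈ F n, ∃ p : LevelPath F E n, p.1 (Fin.last n) = u := by
  intro n
  induction n with
  | zero =>
    exact fun u hu =>
      ⟨⟨fun _ => u, fun j => by rwa [Fin.fin_one_eq_zero j], fun j => j.elim0⟩, rfl⟩
  | succ n ih =>
    intro u hu
    obtain ⟨v, hv, hvu⟩ := hpred n u hu
    obtain ⟨p, hp⟩ := ih v hv
    refine ⟨⟨Fin.snoc (α := fun _ => β) p.1 u, fun j => ?_, fun j => ?_⟩, by simp⟩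
    · induction j using Fin.lastCases with
      | last => simpa using hu
      | cast j => simpa using p.2.1 j
    · induction j using Fin.lastCases with
      | last => simpa [Fin.succ_last, hp] using hvu
      | cast j =>
        simp only [Fin.succ_castSucc, Fin.snoc_castSucc, Fin.val_castSucc]
        exact p.2.2 j

theorem exists_path_of_forall_exists_pred (hF : ∀ n, (F n).Finite) (hne : ∀ n, (F n).Nonempty)
    (hpred : ∀ n, ∀ u ∈ F (n + 1), ∃ v ∈ F n, E n v u) :
    ∃ w : ℕ → β, (∀ n, w n ∈ F n) ∧ ∀ n, E n (w n) (w (n + 1)) := by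
  have : ∀ n, Nonempty (LevelPath F E n) := fun n =>
    let ⟨u, hu⟩ := hne n
    ⟨(LevelPath.exists_last_eq hpred n u hu).choose⟩
  have : Finite (LevelPath F E 0) := by
    have := (hF 0).to_subtype
    refine Finite.of_injective (fun p => (⟨p.1 0, p.2.1 0⟩ : F 0)) fun p q hpq => ?_
    exact Subtype.ext <| funext fun j => by
      simpa [Fin.fin_one_eq_zero j] using congrArg Subtype.val hpq
  obtain ⟨f, hf⟩ := exists_seq_forall_proj_of_forall_finite (α := LevelPath F E)
    (fun hin p => p.restrict hin) (fun _ _ => rfl) (fun _ _ _ _ _ _ => Subtype.ext rfl)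
    fun n p => by
      refine Set.Finite.of_finite_image (f := fun q : LevelPath F E (n + 1) => q.1 (Fin.last _))
        ((hF (n + 1)).subset ?_) fun q hq r hr hqr => Subtype.ext (funext fun j => ?_)
      · rintro _ ⟨q, -, rfl⟩
        exact q.2.1 (Fin.last _)
      · induction j using Fin.lastCases with
        | last => exact hqr
        | cast j =>
          have hqr' : q.restrict (Nat.le_succ n) = r.restrict (Nat.le_succ n) :=
            hq.trans hr.symm
          exact congrArg (fun p : LevelPath F E n => p.1 j) hqr'
  refine ⟨fun n => (f n).1 (Fin.last n), fun n => (f n).2.1 (Fin.last n), fun n => ?_⟩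
  have hlast : (f (n + 1)).1 (Fin.last n).castSucc = (f n).1 (Fin.last n) :=
    congrArg (fun p : LevelPath F E n => p.1 (Fin.last n)) (hf (Nat.le_succ n))
  simpa [hlast] using (f (n + 1)).2.2 (Fin.last n)

end LevelledPaths

namespace FinFrag

variable {S Act : Type*}

theorem Prefix.refl (f : FinFrag S Act) : f.Prefix f :=
  ⟨le_rfl, fun _ _ => rfl, fun _ _ => rfl⟩

theorem Prefix.trans {f g k : FinFrag S Act} (hfg : f.Prefix g) (hgk : g.Prefix k) :
    f.Prefix k :=
  ⟨hfg.1.trans hgk.1, fun i hi => (hfg.2.1 i hi).trans (hgk.2.1 i (hi.trans hfg.1)),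
    fun i hi => (hfg.2.2 i hi).trans (hgk.2.2 i (hi.trans_le hfg.1))⟩

def append (f g : FinFrag S Act) : FinFrag S Act where
  len := f.len + g.len
  st k := if k ≤ f.len then f.st k else g.st (k - f.len)
  act k := if k < f.len then f.act k else g.act (k - f.len)

theorem prefix_append (f g : FinFrag S Act) : f.Prefix (f.append g) :=
  ⟨Nat.le_add_right _ _, fun _ hi => (if_pos hi).symm, fun _ hi => (if_pos hi).symm⟩

theorem append_st_add {f g : FinFrag S Act} (hfg : f.lstate = g.fstate) (r : ℕ) :
    (f.append g).st (f.len + r) = g.st r := by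
  rcases Nat.eq_zero_or_pos r with rfl | hr
  · simpa [append, lstate, fstate] using hfg
  · simp [append, hr.ne']

theorem segTrace_add_len_eq_trace (ext : Set Act) {act : ℕ → Act} {j : ℕ} {g : FinFrag S Act}
    (hact : ∀ r < g.len, act (j + r) = g.act r) :
    segTrace ext act j (j + g.len) = g.trace ext := by
  unfold segTrace FinFrag.trace
  rw [Nat.add_sub_cancel_left]
  exact congrArg _ (List.map_congr_left fun r hr => hact r (List.mem_range.mp hr))

theorem append_act_add (f g : FinFrag S Act) (r : ℕ) :
    (f.append g).act (f.len + r) = g.act r := by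
  simp [append]

theorem IsFragOf.append {A : Automaton S Act} {f g : FinFrag S Act} (hf : f.IsFragOf A)
    (hg : g.IsFragOf A) (hfg : f.lstate = g.fstate) : (f.append g).IsFragOf A := by
  intro k hk
  rcases lt_or_ge k f.len with hkf | hkf
  · have hst : (f.append g).st k = f.st k := if_pos hkf.le
    have hst' : (f.append g).st (k + 1) = f.st (k + 1) := if_pos hkf
    have hact : (f.append g).act k = f.act k := if_pos hkf
    rw [hst, hst', hact]
    exact hf k hkf
  · obtain ⟨r, rfl⟩ := Nat.exists_eq_add_of_le hkf
    rw [append_st_add hfg, add_assoc, append_st_add hfg, append_act_add]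
    exact hg r (by simp only [FinFrag.append] at hk; omega)

def concat (f : ℕ → FinFrag S Act) : ℕ → FinFrag S Act
  | 0 => ⟨0, (f 0).st, (f 0).act⟩
  | n + 1 => (concat f n).append (f n)

variable {f : ℕ → FinFrag S Act}

theorem prefix_concat {j n : ℕ} (hjn : j ≤ n) : (concat f j).Prefix (concat f n) := by
  induction n, hjn using Nat.le_induction with
  | base => exact Prefix.refl _
  | succ n _ ih => exact ih.trans (prefix_append _ _)

theorem st_zero_concat (n : ℕ) : (concat f n).st 0 = (f 0).fstate :=
  ((prefix_concat (Nat.zero_le n)).2.1 0 le_rfl).symm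

theorem act_concat_add {t n r : ℕ} (htn : t < n) (hr : r < (f t).len) :
    (concat f n).act ((concat f t).len + r) = (f t).act r :=
  ((prefix_concat htn).2.2 _ (Nat.add_lt_add_left hr _)).symm.trans (append_act_add _ _ r)

theorem lstate_concat (hchain : ∀ t, (f t).lstate = (f (t + 1)).fstate) (n : ℕ) :
    (concat f n).lstate = (f n).fstate := by
  induction n with
  | zero => rfl
  | succ n ih => exact (append_st_add ih _).trans (hchain n)

theorem st_len_concat (hchain : ∀ t, (f t).lstate = (f (t + 1)).fstate) {j n : ℕ}
    (hjn : j ≤ n) : (concat f n).st (concat f j).len = (f j).fstate :=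
  ((prefix_concat hjn).2.1 _ le_rfl).symm.trans (lstate_concat hchain j)

theorem st_concat_add (hchain : ∀ t, (f t).lstate = (f (t + 1)).fstate) {t n r : ℕ}
    (htn : t < n) (hr : r ≤ (f t).len) :
    (concat f n).st ((concat f t).len + r) = (f t).st r :=
  ((prefix_concat htn).2.1 _ (Nat.add_le_add_left hr _)).symm.trans
    (append_st_add (lstate_concat hchain t) r)

theorem IsFragOf.concat {A : Automaton S Act}
    (hchain : ∀ t, (f t).lstate = (f (t + 1)).fstate) (hA : ∀ t, (f t).IsFragOf A) (n : ℕ) :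
    (concat f n).IsFragOf A := by
  induction n with
  | zero => exact fun i hi => absurd hi (Nat.not_lt_zero i)
  | succ n ih => exact ih.append (hA n) (lstate_concat hchain n)

end FinFrag

theorem InfExec.IsExecOf.reachable {S Act : Type*} {A : Automaton S Act} {e : InfExec S Act}
    (he : e.IsExecOf A) (n : ℕ) : Reachable A (e.st n) :=
  ⟨e.take n, ⟨fun i _ => he.2 i, he.1⟩, n, le_rfl, rfl⟩

section Simulation

variable {SA SB Act : Type*} (A : Automaton SA Act) (B : Automaton SB Act) (M : Set (CPair SB))
  (h : CPair SB → CPair SA)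

def FinFrag.SimulatesStep (β : FinFrag SB Act) (s : SA) (a : Act) (s' : SA) : Prop :=
  β.IsFragOf B ∧ β.trace B.ext = atrace A.ext a ∧
    ∀ q ∈ M, (β.Meets q.R → s ∈ (h q).R ∨ s' ∈ (h q).R) ∧
      ((s ∈ (h q).G ∨ s' ∈ (h q).G) → β.Meets q.G)

variable {A B M h}

theorem liveIndexMapFF_concat {g : Set (SA × SB)} {α : InfExec SA Act} {w : ℕ → SB}
    {f : ℕ → FinFrag SB Act} (hw : ∀ t, (α.st t, w t) ∈ g) (hfst : ∀ t, (f t).fstate = w t)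
    (hlst : ∀ t, (f t).lstate = w (t + 1))
    (hf : ∀ t, (f t).SimulatesStep A B M h (α.st t) (α.act t) (α.st (t + 1))) (n : ℕ) :
    LiveIndexMapFF A B g M h (α.take n) (FinFrag.concat f n)
      fun j => (FinFrag.concat f j).len := by
  have hchain : ∀ t, (f t).lstate = (f (t + 1)).fstate := fun t => (hlst t).trans (hfst _).symm
  refine ⟨rfl, fun i j hij _ => (FinFrag.prefix_concat hij).1,
    fun i hi => (FinFrag.prefix_concat hi).1,
    fun i (hi : i ≤ n) => by rw [FinFrag.st_len_concat hchain hi, hfst]; exact hw i, ?_,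
    fun j hj => ⟨n, le_rfl, hj⟩, ?_, ?_⟩
  · rintro _ hi0 (hin : _ ≤ n)
    obtain ⟨t, rfl⟩ := Nat.exists_eq_succ_of_ne_zero hi0.ne'
    exact (FinFrag.segTrace_add_len_eq_trace _ fun r hr => FinFrag.act_concat_add hin hr).trans
      (hf t).2.1
  · rintro q hq _ hi0 (hin : _ ≤ n) ⟨j, hj, hj', hjR⟩
    obtain ⟨t, rfl⟩ := Nat.exists_eq_succ_of_ne_zero hi0.ne'
    obtain ⟨r, rfl⟩ := Nat.exists_eq_add_of_le hj
    have hr : r ≤ (f t).len := Nat.le_of_add_le_add_left hj'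
    refine ((hf t).2.2 q hq).1 ⟨r, hr, ?_⟩
    rwa [← FinFrag.st_concat_add hchain hin hr]
  · rintro q hq _ hi0 (hin : _ ≤ n) hG
    obtain ⟨t, rfl⟩ := Nat.exists_eq_succ_of_ne_zero hi0.ne'
    obtain ⟨r, hr, hrG⟩ := ((hf t).2.2 q hq).2 hG
    exact ⟨_ + r, Nat.le_add_right _ _, Nat.add_le_add_left hr _,
      by rwa [Nat.succ_sub_one, FinFrag.st_concat_add hchain hin hr]⟩

end Simulation

theorem stmt4_general {SA SB Act : Type*} (A : Automaton SA Act) (B : Automaton SB Act)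
    (L : Set (CPair SA)) (M : Set (CPair SB))
    (IA : Set SA) (IB : Set SB)
    (hIA : IsAutInvariant A IA)
    (g : Set (SA × SB)) (h : CPair SB → CPair SA)
    (hsim : IsLPBackwardSim A B L M IA IB g h) (hfin : ImageFinite g)
    (α : InfExec SA Act) (hα : α ∈ lexecs A L) :
    ∃ (β : ℕ → FinFrag SB Act) (m : ℕ → ℕ → ℕ),
      (∀ i, (β i).IsExecOf B ∧ LiveIndexMapFF A B g M h (α.take i) (β i) (m i)) ∧
      (∀ i, 0 < i → (β (i - 1)).Prefix (β i) ∧ ∀ j ≤ i - 1, m (i - 1) j = m i j) ∧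
      InfOften (fun i => 0 < i ∧ (β (i - 1)).StrictPrefix (β i)) := by
  have hIAα : ∀ n, α.st n ∈ IA := fun n => hIA _ (hα.1.reachable n)
  obtain ⟨w, hwF, hwE⟩ := exists_path_of_forall_exists_pred
    (F := fun n => gImg g (α.st n) ∩ IB)
    (E := fun n u u' => ∃ β : FinFrag SB Act, β.fstate = u ∧ β.lstate = u' ∧
      β.SimulatesStep A B M h (α.st n) (α.act n) (α.st (n + 1)))
    (fun n => (hfin _).subset Set.inter_subset_left)
    (fun n => hsim.nonempty_cond _ (hIAα n)) fun n u hu => by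
      obtain ⟨β, hβB, hβf, hβl, hβtr, hβM⟩ := hsim.step_cond _ _ _ (hα.1.2 n) (hIAα n) u hu
      exact ⟨β.fstate, hβf, β, rfl, hβl, hβB, hβtr, hβM⟩
  choose f hfst hlst hf using hwE
  have hchain : ∀ t, (f t).lstate = (f (t + 1)).fstate := fun t => (hlst t).trans (hfst _).symm
  have hprefix : ∀ t, (FinFrag.concat f t).Prefix (FinFrag.concat f (t + 1)) :=
    fun t => FinFrag.prefix_append _ _
  refine ⟨FinFrag.concat f, fun _ j => (FinFrag.concat f j).len, fun i => ⟨⟨?_, ?_⟩, ?_⟩,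
    fun i hi => ?_, fun n => ?_⟩
  · exact FinFrag.IsFragOf.concat hchain (fun t => (hf t).1) i
  · rw [FinFrag.st_zero_concat, hfst]
    exact hsim.start_cond _ hα.1.1 (hwF 0)
  · exact liveIndexMapFF_concat (fun t => (hwF t).1) hfst hlst hf i
  · obtain ⟨t, rfl⟩ := Nat.exists_eq_succ_of_ne_zero hi.ne'
    exact ⟨hprefix t, fun _ _ => rfl⟩
  · obtain ⟨t, htn, hloud⟩ := hsim.nonsilent α hα n
    have hlen : (f t).len ≠ 0 := fun hlen =>
      hloud ⟨hIAα t, f t, (hf t).1, hfst t ▸ hwF t, hlst t ▸ (hwF (t + 1)).1, (hf t).2.1,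
        hlen⟩
    exact ⟨t + 1, by omega, t.succ_pos, hprefix t,
      Nat.lt_add_of_pos_right (Nat.pos_of_ne_zero hlen)⟩

/-- existence of a collection of finite executions of `B` and live
index mappings corresponding to the prefixes of a live execution of `(A, L)`,
given an image-finite liveness-preserving backward simulation `b = (g, h)`. -/
theorem stmt4 {SA SB Act : Type*} (A : Automaton SA Act) (B : Automaton SB Act)
    (L : Set (CPair SA)) (M : Set (CPair SB))
    (hL : IsLivenessCondition A L) (hM : IsLivenessCondition B M)
    (hext : A.ext = B.ext)
    (IA : Set SA) (IB : Set SB)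
    (hIA : IsAutInvariant A IA) (hIB : IsAutInvariant B IB)
    (g : Set (SA × SB)) (h : CPair SB → CPair SA)
    (hsim : IsLPBackwardSim A B L M IA IB g h) (hfin : ImageFinite g)
    (α : InfExec SA Act) (hα : α ∈ lexecs A L) :
    ∃ (β : ℕ → FinFrag SB Act) (m : ℕ → ℕ → ℕ),
      (∀ i, (β i).IsExecOf B ∧ LiveIndexMapFF A B g M h (α.take i) (β i) (m i)) ∧
      (∀ i, 0 < i → (β (i - 1)).Prefix (β i) ∧ ∀ j ≤ i - 1, m (i - 1) j = m i j) ∧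
      InfOften (fun i => 0 < i ∧ (β (i - 1)).StrictPrefix (β i)) :=
  stmt4_general A B L M IA IB hIA g h hsim hfin α hα
end

section
/- Let (A, L) and (B, M) be live automata with the same external actions, and let Rℓ = (R, H) where R ⊆ states(A) × states(B) and H : M → clos(L) is a total mapping over M. Let α and α' be arbitrary infinite executions of (A, L) and (B, M) respectively. If (α, α') ∈ Rℓ (i.e., there exists a live index mapping from α to α' with respect to Rℓ), then α ∈ lexecs(A, L) implies α' ∈ lexecs(B, M). -/
/- Background formalization: automata, executions, traces, complemented-pairs
   liveness conditions, liveness-preserving simulation relations, etc. -/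

open Classical

/-! Along the index mapping, every step `α.st i → α.st (i + 1)` is matched by the segment of
`β` between positions `m i` and `m (i + 1)`, and the segments cover `β` because `m` is cofinal.
States of `q.R` in a segment force states of `(H q).R` at the ends of the matching step, and states
of `(H q).G` at the ends of a step force states of `q.G` in its segment. Hence if `β` visits `q.R`
infinitely often, so does `α` with `(H q).R`; since `H q` lies in the closure of `L`, the live
execution `α` then visits `(H q).G` infinitely often, and so `β` visits `q.G` infinitely often. -/

namespace LiveIndexMapII

variable {SA SB Act : Type*} {A : Automaton SA Act} {B : Automaton SB Act}
  {R : Set (SA × SB)} {M : Set (CPair SB)} {H : CPair SB → CPair SA}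
  {α : InfExec SA Act} {β : InfExec SB Act} {m : ℕ → ℕ}

theorem exists_segment (hm : LiveIndexMapII A B R M H α β m) {j : ℕ} (hj : 0 < j) :
    ∃ i, m i < j ∧ j ≤ m (i + 1) := by
  obtain ⟨i, hi, hi'⟩ := Nat.exists_not_and_succ_of_not_zero_of_exists (p := fun i => j ≤ m i)
    (by simpa [hm.zero] using hj.ne') (hm.cofinal j)
  exact ⟨i, Nat.lt_of_not_le hi, hi'⟩

theorem infOften_R_of_infOften_R (hm : LiveIndexMapII A B R M H α β m) {q : CPair SB} (hq : q ∈ M)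
    (hβ : InfOften fun n => β.st n ∈ q.R) : InfOften fun n => α.st n ∈ (H q).R := by
  intro n
  obtain ⟨j, hnj, hjR⟩ := hβ (m n + 1)
  obtain ⟨i, hij, hji⟩ := hm.exists_segment (show 0 < j by omega)
  have hni : n ≤ i := Nat.le_of_lt_succ (hm.mono.reflect_lt (show m n < m (i + 1) by omega))
  rcases hm.pairR q hq (i + 1) i.succ_pos ⟨j, hij.le, hji, hjR⟩ with h | h
  · exact ⟨i, hni, h⟩
  · exact ⟨i + 1, by omega, h⟩

theorem infOften_G_of_infOften_G (hm : LiveIndexMapII A B R M H α β m) {q : CPair SB} (hq : q ∈ M)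
    (hα : InfOften fun n => α.st n ∈ (H q).G) : InfOften fun n => β.st n ∈ q.G := by
  intro n
  obtain ⟨i₀, hni₀⟩ := hm.cofinal n
  obtain ⟨i, hi₀i, hiG⟩ := hα i₀
  obtain ⟨j, hij, -, hjG⟩ := hm.pairG q hq (i + 1) i.succ_pos (Or.inl hiG)
  exact ⟨j, hni₀.trans ((hm.mono hi₀i).trans hij), hjG⟩

theorem sat_of_sat (hm : LiveIndexMapII A B R M H α β m) {q : CPair SB} (hq : q ∈ M)
    (hα : α.Sat (H q)) : β.Sat q :=
  fun hβ => hm.infOften_G_of_infOften_G hq (hα (hm.infOften_R_of_infOften_R hq hβ))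

end LiveIndexMapII

theorem stmt5_general {SA SB Act : Type*} (A : Automaton SA Act) (B : Automaton SB Act)
    (L : Set (CPair SA)) (M : Set (CPair SB))
    (R : Set (SA × SB)) (H : CPair SB → CPair SA)
    (hH : ∀ q ∈ M, H q ∈ closL A L)
    (α : InfExec SA Act) (α' : InfExec SB Act)
    (hα'e : α'.IsExecOf B)
    (hrel : ∃ m, LiveIndexMapII A B R M H α α' m)
    (hlive : α ∈ lexecs A L) :
    α' ∈ lexecs B M := by
  obtain ⟨m, hm⟩ := hrel
  exact ⟨hα'e, fun q hq => hm.sat_of_sat hq (hH q hq α hlive)⟩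

/-- if infinite executions `α` of `(A, L)` and `α'` of `(B, M)`
are related by a live index mapping with respect to `Rℓ = (R, H)`, and `α` is
live, then `α'` is live. -/
theorem stmt5 {SA SB Act : Type*} (A : Automaton SA Act) (B : Automaton SB Act)
    (L : Set (CPair SA)) (M : Set (CPair SB))
    (hL : IsLivenessCondition A L) (hM : IsLivenessCondition B M)
    (hext : A.ext = B.ext)
    (R : Set (SA × SB)) (H : CPair SB → CPair SA)
    (hH : ∀ q ∈ M, H q ∈ closL A L)
    (α : InfExec SA Act) (α' : InfExec SB Act)
    (hαe : α.IsExecOf A) (hα'e : α'.IsExecOf B)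
    (hrel : ∃ m, LiveIndexMapII A B R M H α α' m)
    (hlive : α ∈ lexecs A L) :
    α' ∈ lexecs B M :=
  stmt5_general A B L M R H hH α α' hα'e hrel hlive
end

section
/- Live Execution Correspondence (backward-simulation case): Let (A, L) and (B, M) be live automata with the same external actions, and suppose there is an image-finite liveness-preserving backward simulation b = (g, h) from (A, L) to (B, M) with respect to some invariants. Then ((A, L), (B, M)) ∈ b: for every live execution α of (A, L) there exists a live execution α' of (B, M) such that (α, α') ∈ b, i.e., there is a live index mapping from α to α' with respect to b. -/
/- Background formalization: automata, executions, traces, complemented-pairs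
   liveness conditions, liveness-preserving simulation relations, etc. -/

open Classical

/-!
Along a live execution `s₀ s₁ ⋯` of `A`, the sets `g[sₙ] ∩ I_B` are finite and nonempty, and by
the step condition each element of level `n + 1` is reached from some element of level `n` by a
fragment of `B` matching the step `sₙ → sₙ₊₁`. Kőnig's lemma yields an infinite path through these
levels, starting in `start(B)`. Concatenating its fragments gives an execution of `B`, infinite
because infinitely many steps are not sometimes-silent, and the partial sums of the fragment
lengths form a live index mapping. That mapping transfers each pair `q ∈ M` back to `h q`, which
every live execution of `A` satisfies since `h q ∈ clos(L)`; so the execution of `B` is live.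
-/

section Koenig

variable {X : Type*} (T : ℕ → Set X) (E : ℕ → X → X → Prop)

abbrev LevelChain (i : ℕ) : Type _ :=
  {w : Fin (i + 1) → X //
    (∀ k : Fin (i + 1), w k ∈ T k) ∧ ∀ k : Fin i, E k (w k.castSucc) (w k.succ)}

namespace LevelChain

variable {T E}

def restrict {i j : ℕ} (hij : i ≤ j) (w : LevelChain T E j) : LevelChain T E i :=
  ⟨w.1 ∘ Fin.castLE (Nat.succ_le_succ hij), fun k => w.2.1 (Fin.castLE _ k), fun k => by
    simpa [Fin.ext_iff] using w.2.2 (Fin.castLE hij k)⟩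

lemma finite (hfin : ∀ n, (T n).Finite) (i : ℕ) : Finite (LevelChain T E i) :=
  ((Set.Finite.pi (t := fun k : Fin (i + 1) => T k) fun k => hfin k).subset
    fun _ hw k _ => hw.1 k).to_subtype

lemma exists_last_eq (hstep : ∀ n, ∀ u' ∈ T (n + 1), ∃ u ∈ T n, E n u u') :
    ∀ i, ∀ u ∈ T i, ∃ w : LevelChain T E i, w.1 (Fin.last i) = u
  | 0, u, hu => ⟨⟨fun _ => u, fun k => by rwa [Fin.fin_one_eq_zero k], fun k => k.elim0⟩, rfl⟩
  | i + 1, u', hu' => by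
    obtain ⟨u, hu, huu'⟩ := hstep i u' hu'
    obtain ⟨w, hw⟩ := exists_last_eq hstep i u hu
    refine ⟨⟨Fin.snoc w.1 u', fun k => ?_, fun k => ?_⟩, by simp⟩
    · induction k using Fin.lastCases with
      | last => simpa using hu'
      | cast k => simpa using w.2.1 k
    · induction k using Fin.lastCases with
      | last => simpa [← Fin.succ_castSucc, hw] using huu'
      | cast k =>
        rw [Fin.succ_castSucc, Fin.snoc_castSucc, Fin.snoc_castSucc, Fin.val_castSucc]
        exact w.2.2 k

end LevelChain

theorem exists_path_of_finite_levels (hfin : ∀ n, (T n).Finite) (hne : ∀ n, (T n).Nonempty)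
    (hstep : ∀ n, ∀ u' ∈ T (n + 1), ∃ u ∈ T n, E n u u') :
    ∃ U : ℕ → X, (∀ n, U n ∈ T n) ∧ ∀ n, E n (U n) (U (n + 1)) := by
  have := LevelChain.finite (E := E) hfin
  have : ∀ i, Nonempty (LevelChain T E i) := fun i =>
    let ⟨u, hu⟩ := hne i
    let ⟨w, _⟩ := LevelChain.exists_last_eq hstep i u hu
    ⟨w⟩
  obtain ⟨f, hf⟩ := exists_seq_forall_proj_of_forall_finite (α := LevelChain T E)
    (fun hij => LevelChain.restrict hij) (fun _ _ => rfl)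
    (fun _ _ _ _ _ _ => Subtype.ext (funext fun _ => congrArg _ (Fin.ext rfl)))
    (fun _ _ => Set.toFinite _)
  refine ⟨fun n => (f n).1 (Fin.last n), fun n => (f n).2.1 (Fin.last n), fun n => ?_⟩
  have hprev : (f (n + 1)).1 (Fin.last n).castSucc = (f n).1 (Fin.last n) := by
    rw [← hf (Nat.le_succ n)]
    rfl
  simpa [hprev] using (f (n + 1)).2.2 (Fin.last n)

end Koenig

section Concat

variable {S Act : Type*}

def fragOffset (β : ℕ → FinFrag S Act) (n : ℕ) : ℕ := ∑ k ∈ Finset.range n, (β k).len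

variable {β : ℕ → FinFrag S Act}

@[simp]
lemma fragOffset_zero : fragOffset β 0 = 0 := rfl

lemma fragOffset_succ (n : ℕ) : fragOffset β (n + 1) = fragOffset β n + (β n).len :=
  Finset.sum_range_succ _ _

lemma fragOffset_mono : Monotone (fragOffset β) :=
  monotone_nat_of_le_succ fun n => by rw [fragOffset_succ]; omega

lemma exists_le_fragOffset (hpos : InfOften fun n => 0 < (β n).len) (j : ℕ) :
    ∃ i, j ≤ fragOffset β i := by
  induction j with
  | zero => exact ⟨0, le_rfl⟩
  | succ j ih =>
    obtain ⟨i, hi⟩ := ih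
    obtain ⟨n, hin, hn⟩ := hpos i
    refine ⟨n + 1, ?_⟩
    have := fragOffset_mono (β := β) hin
    rw [fragOffset_succ]
    omega

lemma exists_fragOffset_le_lt (hpos : InfOften fun n => 0 < (β n).len) (j : ℕ) :
    ∃ n, fragOffset β n ≤ j ∧ j < fragOffset β (n + 1) := by
  have hex : ∃ n, j < fragOffset β (n + 1) :=
    let ⟨i, hi⟩ := exists_le_fragOffset hpos (j + 1)
    ⟨i, hi.trans_lt' (Nat.lt_succ_self j) |>.trans_le (fragOffset_mono (Nat.le_succ i))⟩
  refine ⟨Nat.find hex, ?_, Nat.find_spec hex⟩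
  rcases Nat.eq_zero_or_eq_succ_pred (Nat.find hex) with h0 | hsucc
  · simp [h0]
  · rw [hsucc]
    exact not_lt.mp (Nat.find_min hex (by omega))

lemma eq_of_fragOffset_le_lt {j m n : ℕ} (hm : fragOffset β m ≤ j)
    (hm' : j < fragOffset β (m + 1)) (hn : fragOffset β n ≤ j)
    (hn' : j < fragOffset β (n + 1)) : m = n := by
  by_contra hne
  rcases Nat.lt_or_gt_of_ne hne with hlt | hlt
  · have := fragOffset_mono (β := β) (show m + 1 ≤ n by omega)
    omega
  · have := fragOffset_mono (β := β) (show n + 1 ≤ m by omega)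
    omega

lemma fstate_eq_of_fragOffset_eq (hchain : ∀ n, (β n).lstate = (β (n + 1)).fstate) {a b : ℕ}
    (hab : a ≤ b) (hoff : fragOffset β a = fragOffset β b) : (β b).fstate = (β a).fstate := by
  induction b, hab using Nat.le_induction with
  | base => rfl
  | succ b hab ih =>
    have hb := fragOffset_mono (β := β) hab
    have hlen : (β b).len = 0 := by rw [fragOffset_succ] at hoff; omega
    rw [← hchain b, FinFrag.lstate, hlen, ← ih (by rw [fragOffset_succ] at hoff; omega)]
    rfl

variable (β) in
def IsConcat (e : InfExec S Act) : Prop :=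
  ∀ n, (∀ t ≤ (β n).len, e.st (fragOffset β n + t) = (β n).st t) ∧
    ∀ t < (β n).len, e.act (fragOffset β n + t) = (β n).act t

lemma exists_isConcat (hchain : ∀ n, (β n).lstate = (β (n + 1)).fstate)
    (hpos : InfOften fun n => 0 < (β n).len) : ∃ e, IsConcat β e := by
  choose c hc hc' using exists_fragOffset_le_lt hpos
  have hseg : ∀ n, ∀ t < (β n).len, c (fragOffset β n + t) = n := fun n t ht =>
    eq_of_fragOffset_le_lt (hc _) (hc' _) (Nat.le_add_right _ _) (by rw [fragOffset_succ]; omega)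
  -- at a block boundary `c` may pick a later, empty fragment, whose first state is the same
  have hboundary : ∀ n,
      (β (c (fragOffset β n))).st (fragOffset β n - fragOffset β (c (fragOffset β n))) =
        (β n).fstate := by
    intro n
    have hn : n ≤ c (fragOffset β n) := by
      by_contra! hlt
      have := fragOffset_mono (β := β) (show c (fragOffset β n) + 1 ≤ n by omega)
      have := hc' (fragOffset β n)
      omega
    have hoff := le_antisymm (hc (fragOffset β n)) (fragOffset_mono hn)
    rw [hoff, Nat.sub_self]
    exact fstate_eq_of_fragOffset_eq hchain hn hoff.symm
  refine ⟨⟨fun j => (β (c j)).st (j - fragOffset β (c j)),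
    fun j => (β (c j)).act (j - fragOffset β (c j))⟩, fun n => ⟨fun t ht => ?_, fun t ht => ?_⟩⟩
  · rcases ht.lt_or_eq with ht | rfl
    · simp only [hseg n t ht, Nat.add_sub_cancel_left]
    · simp only [← fragOffset_succ, hboundary, ← hchain]
      rfl
  · simp only [hseg n t ht, Nat.add_sub_cancel_left]

namespace IsConcat

variable {e : InfExec S Act}

lemma st_fragOffset (he : IsConcat β e) (n : ℕ) : e.st (fragOffset β n) = (β n).fstate :=
  (he n).1 0 (Nat.zero_le _)

lemma isExecOf {B : Automaton S Act} (he : IsConcat β e) (hfrag : ∀ n, (β n).IsFragOf B)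
    (hstart : (β 0).fstate ∈ B.start) (hpos : InfOften fun n => 0 < (β n).len) :
    e.IsExecOf B := by
  refine ⟨by rwa [← fragOffset_zero (β := β), he.st_fragOffset], fun j => ?_⟩
  obtain ⟨n, hn, hn'⟩ := exists_fragOffset_le_lt hpos j
  obtain ⟨t, rfl⟩ := Nat.exists_eq_add_of_le hn
  have ht : t < (β n).len := by rw [fragOffset_succ] at hn'; omega
  rw [(he n).1 t ht.le, (he n).2 t ht, add_assoc, (he n).1 (t + 1) ht]
  exact hfrag n t ht

lemma segTrace_eq (he : IsConcat β e) (ext : Set Act) (n : ℕ) :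
    segTrace ext e.act (fragOffset β n) (fragOffset β (n + 1)) = (β n).trace ext := by
  rw [segTrace, FinFrag.trace, fragOffset_succ, Nat.add_sub_cancel_left]
  congr 1
  exact List.map_congr_left fun t ht => (he n).2 t (List.mem_range.mp ht)

lemma exists_st_mem_iff_meets (he : IsConcat β e) (n : ℕ) (X : Set S) :
    (∃ j, fragOffset β n ≤ j ∧ j ≤ fragOffset β (n + 1) ∧ e.st j ∈ X) ↔ (β n).Meets X := by
  rw [fragOffset_succ]
  constructor
  · rintro ⟨j, hj, hj', hX⟩
    obtain ⟨t, rfl⟩ := Nat.exists_eq_add_of_le hj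
    exact ⟨t, by omega, (he n).1 t (by omega) ▸ hX⟩
  · rintro ⟨t, ht, hX⟩
    exact ⟨fragOffset β n + t, by omega, by omega, ((he n).1 t ht).symm ▸ hX⟩

end IsConcat

end Concat

section LiveIndexMap

variable {SA SB Act : Type*} {A : Automaton SA Act} {B : Automaton SB Act}
  {M : Set (CPair SB)} {H : CPair SB → CPair SA}

def MatchesStep (A : Automaton SA Act) (B : Automaton SB Act) (M : Set (CPair SB))
    (H : CPair SB → CPair SA) (s : SA) (a : Act) (s' : SA) (β : FinFrag SB Act) : Prop :=
  β.trace B.ext = atrace A.ext a ∧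
    ∀ q ∈ M, (β.Meets q.R → s ∈ (H q).R ∨ s' ∈ (H q).R) ∧
      ((s ∈ (H q).G ∨ s' ∈ (H q).G) → β.Meets q.G)

lemma IsConcat.liveIndexMapII {R : Set (SA × SB)} {α : InfExec SA Act}
    {β : ℕ → FinFrag SB Act} {e : InfExec SB Act} (he : IsConcat β e)
    (hrel : ∀ n, (α.st n, (β n).fstate) ∈ R)
    (hmatch : ∀ n, MatchesStep A B M H (α.st n) (α.act n) (α.st (n + 1)) (β n))
    (hpos : InfOften fun n => 0 < (β n).len) :
    LiveIndexMapII A B R M H α e (fragOffset β) where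
  zero := fragOffset_zero
  mono := fragOffset_mono
  rel i := he.st_fragOffset i ▸ hrel i
  tr i hi := by
    obtain ⟨n, rfl⟩ := Nat.exists_eq_add_of_lt hi
    simpa [he.segTrace_eq] using (hmatch n).1
  cofinal := exists_le_fragOffset hpos
  pairR q hq i hi hR := by
    obtain ⟨n, rfl⟩ := Nat.exists_eq_add_of_lt hi
    simp only [zero_add, Nat.add_sub_cancel] at hR ⊢
    exact ((hmatch n).2 q hq).1 ((he.exists_st_mem_iff_meets n q.R).1 hR)
  pairG q hq i hi hG := by
    obtain ⟨n, rfl⟩ := Nat.exists_eq_add_of_lt hi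
    simp only [zero_add, Nat.add_sub_cancel] at hG ⊢
    exact (he.exists_st_mem_iff_meets n q.G).2 (((hmatch n).2 q hq).2 hG)

lemma LiveIndexMapII.sat_of_sat_s7 {R : Set (SA × SB)} {α : InfExec SA Act} {β : InfExec SB Act}
    {m : ℕ → ℕ} (hm : LiveIndexMapII A B R M H α β m) {q : CPair SB} (hq : q ∈ M)
    (hα : α.Sat (H q)) : β.Sat q := by
  intro hR N
  have hαR : InfOften fun n => α.st n ∈ (H q).R := by
    intro N
    obtain ⟨j, hj, hjR⟩ := hR (m (N + 1) + 1)
    have hex : ∃ i, j ≤ m i := hm.cofinal j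
    have hi := Nat.find_spec hex
    have hi0 : 0 < Nat.find hex := by
      by_contra! h0
      rw [Nat.le_zero.mp h0, hm.zero] at hi
      omega
    have hprev : m (Nat.find hex - 1) < j := not_le.mp (Nat.find_min hex (by omega))
    have hN : N + 1 ≤ Nat.find hex := by
      by_contra! hlt
      have := hm.mono (show Nat.find hex ≤ N + 1 by omega)
      omega
    rcases hm.pairR q hq _ hi0 ⟨j, hprev.le, hi, hjR⟩ with h | h
    · exact ⟨_, by omega, h⟩
    · exact ⟨_, by omega, h⟩
  obtain ⟨i₀, hi₀⟩ := hm.cofinal N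
  obtain ⟨n, hn, hG⟩ := hα hαR (i₀ + 1)
  obtain ⟨j, hj, -, hjG⟩ := hm.pairG q hq n (by omega) (Or.inr hG)
  exact ⟨j, hi₀.trans ((hm.mono (by omega)).trans hj), hjG⟩

end LiveIndexMap

lemma IsAutInvariant.st_mem {S Act : Type*} {A : Automaton S Act} {I : Set S}
    (hI : IsAutInvariant A I) {α : InfExec S Act} (hα : α.IsExecOf A) (n : ℕ) : α.st n ∈ I :=
  hI _ ⟨α.take n, ⟨fun i _ => hα.2 i, hα.1⟩, n, le_rfl, rfl⟩

namespace IsLPBackwardSim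

variable {SA SB Act : Type*} {A : Automaton SA Act} {B : Automaton SB Act}
  {L : Set (CPair SA)} {M : Set (CPair SB)} {IA : Set SA} {IB : Set SB}
  {g : Set (SA × SB)} {h : CPair SB → CPair SA} {α : InfExec SA Act}

lemma exists_matching_frags (hsim : IsLPBackwardSim A B L M IA IB g h) (hfin : ImageFinite g)
    (hα : α.IsExecOf A) (hαI : ∀ n, α.st n ∈ IA) :
    ∃ β : ℕ → FinFrag SB Act, (∀ n, (β n).fstate ∈ gImg g (α.st n) ∩ IB) ∧
      (∀ n, (β n).lstate = (β (n + 1)).fstate) ∧ (∀ n, (β n).IsFragOf B) ∧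
      ∀ n, MatchesStep A B M h (α.st n) (α.act n) (α.st (n + 1)) (β n) := by
  obtain ⟨U, hU, hE⟩ := exists_path_of_finite_levels (fun n => gImg g (α.st n) ∩ IB)
    (fun n u u' => ∃ β : FinFrag SB Act, β.fstate = u ∧ β.lstate = u' ∧ β.IsFragOf B ∧
      MatchesStep A B M h (α.st n) (α.act n) (α.st (n + 1)) β)
    (fun n => (hfin _).inter_of_left IB) (fun n => hsim.nonempty_cond _ (hαI n))
    (fun n u' hu' => by
      obtain ⟨β, hfrag, hfst, hlst, hmatch⟩ := hsim.step_cond _ _ _ (hα.2 n) (hαI n) u' hu'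
      exact ⟨β.fstate, hfst, β, rfl, hlst, hfrag, hmatch⟩)
  choose β hfst hlst hfrag hmatch using hE
  exact ⟨β, fun n => hfst n ▸ hU n, fun n => by rw [hlst, hfst], hfrag, hmatch⟩

lemma infOften_len_pos (hsim : IsLPBackwardSim A B L M IA IB g h) (hα : α ∈ lexecs A L)
    (hαI : ∀ n, α.st n ∈ IA) {β : ℕ → FinFrag SB Act}
    (hfst : ∀ n, (β n).fstate ∈ gImg g (α.st n) ∩ IB)
    (hchain : ∀ n, (β n).lstate = (β (n + 1)).fstate) (hfrag : ∀ n, (β n).IsFragOf B)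
    (hmatch : ∀ n, MatchesStep A B M h (α.st n) (α.act n) (α.st (n + 1)) (β n)) :
    InfOften fun n => 0 < (β n).len := by
  intro N
  obtain ⟨n, hn, hsilent⟩ := hsim.nonsilent α hα N
  refine ⟨n, hn, Nat.pos_of_ne_zero fun hlen => hsilent ⟨hαI n, β n, hfrag n, hfst n, ?_,
    (hmatch n).1, hlen⟩⟩
  rw [hchain]
  exact (hfst (n + 1)).1

end IsLPBackwardSim

theorem stmt7_general {SA SB Act : Type*} (A : Automaton SA Act) (B : Automaton SB Act)
    (L : Set (CPair SA)) (M : Set (CPair SB))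
    (IA : Set SA) (IB : Set SB)
    (hIA : IsAutInvariant A IA)
    (g : Set (SA × SB)) (h : CPair SB → CPair SA)
    (hsim : IsLPBackwardSim A B L M IA IB g h) (hfin : ImageFinite g) :
    ∀ α ∈ lexecs A L, ∃ α' ∈ lexecs B M, ∃ m, LiveIndexMapII A B g M h α α' m := by
  intro α hα
  have hαI := hIA.st_mem hα.1
  obtain ⟨β, hfst, hchain, hfrag, hmatch⟩ := hsim.exists_matching_frags hfin hα.1 hαI
  have hpos := hsim.infOften_len_pos hα hαI hfst hchain hfrag hmatch
  obtain ⟨e, he⟩ := exists_isConcat hchain hpos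
  have hm := he.liveIndexMapII (fun n => (hfst n).1) hmatch hpos
  have hexec := he.isExecOf hfrag (hsim.start_cond _ hα.1.1 (hfst 0)) hpos
  exact ⟨e, ⟨hexec, fun q hq => hm.sat_of_sat_s7 hq (hsim.h_total q hq α hα)⟩, _, hm⟩

/-- Live Execution Correspondence, backward-simulation case. -/
theorem stmt7 {SA SB Act : Type*} (A : Automaton SA Act) (B : Automaton SB Act)
    (L : Set (CPair SA)) (M : Set (CPair SB))
    (hL : IsLivenessCondition A L) (hM : IsLivenessCondition B M)
    (hext : A.ext = B.ext)
    (IA : Set SA) (IB : Set SB)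
    (hIA : IsAutInvariant A IA) (hIB : IsAutInvariant B IB)
    (g : Set (SA × SB)) (h : CPair SB → CPair SA)
    (hsim : IsLPBackwardSim A B L M IA IB g h) (hfin : ImageFinite g) :
    ∀ α ∈ lexecs A L, ∃ α' ∈ lexecs B M, ∃ m, LiveIndexMapII A B g M h α α' m :=
  stmt7_general A B L M IA IB hIA g h hsim hfin
end

section
/- Lattice Lemma: Let (A, L) be a live automaton and let (P, ≺) be a complemented-pairs lattice over clos(L), with ⊥ = bottom(P) and ⊤ = top(P). Then ⟨⊥.R, ⊤.G⟩ ∈ clos(L); that is, every live execution of (A, L) that contains infinitely many states in ⊥.R also contains infinitely many states in ⊤.G. -/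
/- Background formalization: automata, executions, traces, complemented-pairs
   liveness conditions, liveness-preserving simulation relations, etc. -/

open Classical

/-!
Along a live execution every pair of `P` is satisfied, so infinitely many visits to `r.R` give
infinitely many visits to `r.G`, hence (finitely many immediate successors) infinitely many visits
to `w.R` for some successor `w` of `r`. Iterating climbs strictly in the finite order `≺`, so it
stops, and it can only stop at `⊤`.
-/

open Filter

theorem Set.Finite.wellFoundedOn_of_irrefl_of_trans {α : Type*} {s : Set α} (hs : s.Finite)
    {r : α → α → Prop} (hirr : ∀ a ∈ s, ¬ r a a)
    (htrans : ∀ a ∈ s, ∀ b ∈ s, ∀ c ∈ s, r a b → r b c → r a c) :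
    s.WellFoundedOn r := by
  have : Finite s := hs
  have : IsTrans s (Subrel r (· ∈ s)) := ⟨fun a b c => htrans a a.2 b b.2 c c.2⟩
  have : Std.Irrefl (Subrel r (· ∈ s)) := ⟨fun a => hirr a a.2⟩
  exact Finite.wellFounded_of_trans_of_irrefl _

theorem infOften_iff_frequently_atTop {Q : ℕ → Prop} : InfOften Q ↔ ∃ᶠ n in atTop, Q n :=
  frequently_atTop.symm

theorem InfOften.mono {Q Q' : ℕ → Prop} (h : InfOften Q) (hQ : ∀ n, Q n → Q' n) :
    InfOften Q' :=
  fun k => (h k).imp fun _ hn => ⟨hn.1, hQ _ hn.2⟩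

theorem InfOften.exists_of_finite {ι : Type*} {I : Set ι} (hI : I.Finite) {Q : ι → ℕ → Prop}
    (h : InfOften fun n => ∃ i ∈ I, Q i n) : ∃ i ∈ I, InfOften (Q i) := by
  simpa only [infOften_iff_frequently_atTop, hI.frequently_exists] using h

theorem InfExec.sat_R_top_G_of_mem {S Act : Type*} {e : InfExec S Act}
    {P : Set (CPair S)} {lt : CPair S → CPair S → Prop} (hsat : ∀ p ∈ P, e.Sat p)
    (hPfin : P.Finite) (hirr : ∀ r ∈ P, ¬ lt r r)
    (htrans : ∀ r ∈ P, ∀ w ∈ P, ∀ v ∈ P, lt r w → lt w v → lt r v) {top : CPair S}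
    (hsucc : ∀ r ∈ P, r ≠ top → r.G ⊆ ⋃ w ∈ succSet P lt r, w.R) {r : CPair S} (hr : r ∈ P) :
    e.Sat ⟨r.R, top.G⟩ := by
  have hwf : P.WellFoundedOn (flip lt) := hPfin.wellFoundedOn_of_irrefl_of_trans hirr
    fun a ha b hb c hc hab hbc => htrans c hc b hb a ha hbc hab
  refine hwf.induction (P := fun r => e.Sat ⟨r.R, top.G⟩) hr fun r hr ih hR => ?_
  have hG := hsat r hr hR
  by_cases hrtop : r = top
  · exact hrtop ▸ hG
  have hsuccR : InfOften fun n => ∃ w ∈ succSet P lt r, e.st n ∈ w.R :=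
    hG.mono fun n hn => by simpa only [Set.mem_iUnion, exists_prop] using hsucc r hr hrtop hn
  obtain ⟨w, hw, hwR⟩ := InfOften.exists_of_finite (hPfin.subset fun _ hw => hw.1) hsuccR
  exact ih w hw.1 hw.2.1 hwR

theorem stmt10_general {S Act : Type*} (A : Automaton S Act) (L : Set (CPair S))
    (P : Set (CPair S)) (lt : CPair S → CPair S → Prop)
    (hPsub : P ⊆ closL A L) (hPfin : P.Finite)
    (hirr : ∀ r ∈ P, ¬ lt r r)
    (htrans : ∀ r ∈ P, ∀ w ∈ P, ∀ v ∈ P, lt r w → lt w v → lt r v)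
    (bot top : CPair S) (hbot : bot ∈ P)
    (hsucc : ∀ r ∈ P, r ≠ top → r.G ⊆ ⋃ w ∈ succSet P lt r, w.R) :
    CPair.mk bot.R top.G ∈ closL A L :=
  fun e he => e.sat_R_top_G_of_mem (fun _ hp => hPsub hp e he) hPfin hirr htrans hsucc hbot

/-- Lattice Lemma. If `(P, ≺)` is a complemented-pairs lattice
over `clos(L)` with bottom `⊥` and top `⊤`, then `⟨⊥.R, ⊤.G⟩ ∈ clos(L)`. -/
theorem stmt10 {S Act : Type*} (A : Automaton S Act) (L : Set (CPair S))
    (hL : IsLivenessCondition A L)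
    (P : Set (CPair S)) (lt : CPair S → CPair S → Prop)
    (hPsub : P ⊆ closL A L) (hPfin : P.Finite)
    (hirr : ∀ r ∈ P, ¬ lt r r)
    (htrans : ∀ r ∈ P, ∀ w ∈ P, ∀ v ∈ P, lt r w → lt w v → lt r v)
    (bot top : CPair S) (hbot : bot ∈ P) (htop : top ∈ P)
    (hbotmin : ∀ r ∈ P, pLe lt bot r) (htopmax : ∀ r ∈ P, pLe lt r top)
    (hsucc : ∀ r ∈ P, r ≠ top → r.G ⊆ ⋃ w ∈ succSet P lt r, w.R) :
    CPair.mk bot.R top.G ∈ closL A L :=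
  stmt10_general A L P lt hPsub hPfin hirr htrans bot top hbot hsucc
end
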